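/- arXiv:1206.0567 — 2 statements merged into one kernel-verified Lean document; each statement's English description precedes it below -/
import Mathlib

section
/- Let X ⊆ ℝ, let f(x;θ) be a family of probability densities on X with q > 0, M_q[f;θ] = ∫_X f(x;θ)^q dx finite and positive, let θ̂ : X → ℝ be an estimator, and let α > 1, β be Hölder conjugates (1/α + 1/β = 1). Assume differentiation under the integral sign is valid for the q-bias B_q(θ) = ∫_X (θ̂(x) − θ) f(x;θ)^q / M_q[f;θ] dx, i.e. 1 + B_q'(θ) = ∫_X (θ̂(x) − θ) ∂_θ[f(x;θ)^q / M_q[f;θ]] dx. If moreover there is c(θ) > 0 such that for almost every x, (q / M_q[f;θ]^{1/q}) · ∂_θ ln_{q*}(f(x;θ) / M_q[f;θ]^{1/q}) = c(θ) · sign(θ̂(x) − θ) · |θ̂(x) − θ|^{α−1} with q* = 2 − q, then equality holds: (∫_X |θ̂(x) − θ|^α f(x;θ) dx)^{1/α} · I_{β,q}[f;θ]^{1/β} = |1 + B_q'(θ)|, where I_{β,q}[f;θ] = ∫_X |(f(x;θ)^{q−1}/M_q[f;θ]) ∂_θ ln(f(x;θ)^q/M_q[f;θ])|^β f(x;θ)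 dx. -/
/-!
Write `u = θhat - θ` and `φ = f^q / M_q` for the escort density. Since
`ln_{2-q}(f / M_q^{1/q}) = (φ^{(q-1)/q} - 1)/(q - 1)`, the chain rule turns the score condition
into `∂_θ φ = c · sign(u) |u|^{α-1} · f`, and `f^{q-1}/M_q · ∂_θ log φ = ∂_θ φ / f` is the same
signed power. Hence `1 + B' = c E` and `I_{β,q} = c^β E` with `E = ∫ |u|^α f`, and
`E^{1/α} (c^β E)^{1/β} = c E` because `1/α + 1/β = 1`: Hölder's inequality is attained since its
two factors are proportional. The chain rules are proved without assuming differentiability in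
`θ`, because `deriv` takes the junk value `0` where it fails.
-/

open MeasureTheory Real

/-- The deformed (Tsallis) `q`-logarithm: `ln_q(x) = (x^(1-q) - 1)/(1-q)`. -/
noncomputable def lnq (p x : ℝ) : ℝ := (x ^ (1 - p) - 1) / (1 - p)

open Filter Topology

/-- Where `φ` is not differentiable the right-hand side is the junk value `0`; the hypothesis
forces the left-hand side to vanish there as well. -/
theorem deriv_comp_of_ne_zero_imp_differentiableAt {F φ : ℝ → ℝ} {θ : ℝ}
    (hF : DifferentiableAt ℝ F (φ θ))
    (hφ : ∀ d ≠ 0, HasDerivAt (fun t => F (φ t)) d θ → DifferentiableAt ℝ φ θ) :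
    deriv (fun t => F (φ t)) θ = deriv F (φ θ) * deriv φ θ := by
  by_cases hφθ : DifferentiableAt ℝ φ θ
  · exact deriv_comp θ hF hφθ
  · rw [deriv_zero_of_not_differentiableAt hφθ, mul_zero]
    by_contra hd
    exact hφθ (hφ _ hd (differentiableAt_of_deriv_ne_zero hd).hasDerivAt)

theorem deriv_rpow_const_comp_of_nonneg {φ : ℝ → ℝ} {θ r : ℝ} (hr : r ≠ 0)
    (hφ : ∀ t, 0 ≤ φ t) (hθ : 0 < φ θ) :
    deriv (fun t => φ t ^ r) θ = r * φ θ ^ (r - 1) * deriv φ θ := by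
  rw [deriv_comp_of_ne_zero_imp_differentiableAt (F := fun y => y ^ r)
    (differentiableAt_rpow_const_of_ne r hθ.ne') fun d _ hd => ?_, Real.deriv_rpow_const]
  have hinv : (fun t => (φ t ^ r) ^ r⁻¹) = φ := funext fun t => rpow_rpow_inv (hφ t) hr
  rw [← hinv]
  exact hd.differentiableAt.rpow_const (Or.inl (rpow_pos_of_pos hθ r).ne')

theorem eventually_pos_of_hasDerivAt_log_comp {φ : ℝ → ℝ} {θ d : ℝ} (hφ : ∀ t, 0 ≤ φ t)
    (hθ : 0 < φ θ) (hd : HasDerivAt (fun t => log (φ t)) d θ) (hd0 : d ≠ 0) :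
    ∀ᶠ t in 𝓝 θ, 0 < φ t := by
  rw [← nhdsNE_sup_pure, eventually_sup, eventually_pure]
  -- a nonzero derivative keeps `log ∘ φ` off the junk value `log 0 = 0` near `θ`
  refine ⟨(hd.eventually_ne hd0 (c := 0)).mono fun t ht => (hφ t).lt_of_ne fun h0 => ht ?_, hθ⟩
  rw [← h0, log_zero]

theorem deriv_log_comp_of_nonneg {φ : ℝ → ℝ} {θ : ℝ} (hφ : ∀ t, 0 ≤ φ t) (hθ : 0 < φ θ) :
    deriv (fun t => log (φ t)) θ = deriv φ θ / φ θ := by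
  rw [deriv_comp_of_ne_zero_imp_differentiableAt (F := log) (differentiableAt_log hθ.ne')
    fun d hd0 hd => ?_, Real.deriv_log, inv_mul_eq_div]
  have hexp : φ =ᶠ[𝓝 θ] fun t => exp (log (φ t)) :=
    (eventually_pos_of_hasDerivAt_log_comp hφ hθ hd hd0).mono fun t ht => (exp_log ht).symm
  exact (differentiable_exp.differentiableAt.comp θ hd.differentiableAt).congr_of_eventuallyEq hexp

theorem lnq_two_sub (q y : ℝ) : lnq (2 - q) y = (y ^ (q - 1) - 1) / (q - 1) := by
  rw [lnq, show 1 - (2 - q) = q - 1 by ring]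

theorem deriv_rpow_eq_mul_deriv_lnq_two_sub {a : ℝ → ℝ} {θ q : ℝ} (hq0 : q ≠ 0) (hq1 : q ≠ 1)
    (ha : ∀ t, 0 ≤ a t) (hθ : 0 < a θ) :
    deriv (fun t => a t ^ q) θ = q * deriv (fun t => lnq (2 - q) (a t)) θ * a θ := by
  simp only [lnq_two_sub]
  rw [deriv_div_const, deriv_sub_const, deriv_rpow_const_comp_of_nonneg hq0 ha hθ,
    deriv_rpow_const_comp_of_nonneg (sub_ne_zero.2 hq1) ha hθ, rpow_sub_one hθ.ne' (q - 1)]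
  field_simp [sub_ne_zero.2 hq1]

theorem div_rpow_one_div_rpow {g m q : ℝ} (hq : q ≠ 0) (hg : 0 ≤ g) (hm : 0 ≤ m) :
    (g / m ^ (1 / q)) ^ q = g ^ q / m := by
  rw [div_rpow hg (rpow_nonneg hm _), ← rpow_mul hm, one_div_mul_cancel hq, rpow_one]

theorem deriv_rpow_div_eq_mul_deriv_lnq {g m : ℝ → ℝ} {θ q : ℝ} (hq0 : q ≠ 0) (hq1 : q ≠ 1)
    (hg : ∀ t, 0 ≤ g t) (hm : ∀ t, 0 < m t) :
    deriv (fun t => g t ^ q / m t) θ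
      = q / m θ ^ (1 / q) * deriv (fun t => lnq (2 - q) (g t / m t ^ (1 / q))) θ * g θ := by
  rcases (hg θ).eq_or_lt with hθ | hθ
  · have hmin : IsLocalMin (fun t => g t ^ q / m t) θ :=
      Eventually.of_forall fun t => by
        simp only [← hθ, zero_rpow hq0, zero_div]
        exact div_nonneg (rpow_nonneg (hg t) q) (hm t).le
    rw [hmin.deriv_eq_zero, ← hθ, mul_zero]
  · have ha : ∀ t, 0 ≤ g t / m t ^ (1 / q) :=
      fun t => div_nonneg (hg t) (rpow_nonneg (hm t).le _)
    have hescort : (fun t => g t ^ q / m t) = fun t => (g t / m t ^ (1 / q)) ^ q :=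
      funext fun t => (div_rpow_one_div_rpow hq0 (hg t) (hm t).le).symm
    rw [hescort, deriv_rpow_eq_mul_deriv_lnq_two_sub hq0 hq1 ha
      (div_pos hθ (rpow_pos_of_pos (hm θ) _))]
    ring

theorem rpow_sub_one_div_mul_deriv_log_rpow_div {g m : ℝ → ℝ} {θ q : ℝ}
    (hg : ∀ t, 0 ≤ g t) (hm : ∀ t, 0 < m t) (hθ : 0 < g θ) :
    g θ ^ (q - 1) / m θ * deriv (fun t => log (g t ^ q / m t)) θ
      = deriv (fun t => g t ^ q / m t) θ / g θ := by
  have hgq : 0 < g θ ^ q := rpow_pos_of_pos hθ q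
  rw [deriv_log_comp_of_nonneg (fun t => div_nonneg (rpow_nonneg (hg t) q) (hm t).le)
    (div_pos hgq (hm θ)), rpow_sub_one hθ.ne']
  field_simp [(hm θ).ne', hgq.ne']

theorem mul_sign_mul_abs_rpow_sub_one {α : ℝ} (hα : α ≠ 0) (u : ℝ) :
    u * (sign u * |u| ^ (α - 1)) = |u| ^ α := by
  rcases lt_trichotomy u 0 with hu | rfl | hu
  · rw [sign_of_neg hu, rpow_sub_one (abs_pos.2 hu.ne).ne', abs_of_neg hu]
    field_simp [hu.ne]
  · simp [zero_rpow hα]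
  · rw [sign_of_pos hu, rpow_sub_one (abs_pos.2 hu.ne').ne', abs_of_pos hu]
    field_simp [hu.ne']

theorem abs_sign_mul_abs_rpow_sub_one_rpow {α β : ℝ} (hαβ : α.HolderConjugate β) (u : ℝ) :
    |sign u * |u| ^ (α - 1)| ^ β = |u| ^ α := by
  rcases eq_or_ne u 0 with rfl | hu
  · simp [zero_rpow hαβ.ne_zero, zero_rpow hαβ.symm.ne_zero]
  · have hsign : |sign u| = 1 := by
      rcases sign_apply_eq_of_ne_zero u hu with h | h <;> simp [h]
    rw [abs_mul, hsign, one_mul, abs_of_nonneg (rpow_nonneg (abs_nonneg u) _),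
      ← rpow_mul (abs_nonneg u), hαβ.sub_one_mul_conj]

theorem sign_mul_abs_rpow_eq_zero_iff {α u : ℝ} : sign u * |u| ^ (α - 1) = 0 ↔ u = 0 := by
  rw [mul_eq_zero, sign_eq_zero_iff, or_iff_left_iff_imp]
  intro h
  by_contra hu
  exact (rpow_pos_of_pos (abs_pos.2 hu) _).ne' h

section ScoreCondition

variable {g m : ℝ → ℝ} {θ q α c u : ℝ}

theorem mul_deriv_rpow_div_of_deriv_lnq_eq (hq0 : q ≠ 0) (hq1 : q ≠ 1) (hα : α ≠ 0)
    (hg : ∀ t, 0 ≤ g t) (hm : ∀ t, 0 < m t)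
    (hscore : q / m θ ^ (1 / q) * deriv (fun t => lnq (2 - q) (g t / m t ^ (1 / q))) θ
      = c * sign u * |u| ^ (α - 1)) :
    u * deriv (fun t => g t ^ q / m t) θ = c * (|u| ^ α * g θ) := by
  rw [deriv_rpow_div_eq_mul_deriv_lnq hq0 hq1 hg hm, hscore,
    ← mul_sign_mul_abs_rpow_sub_one hα u]
  ring

theorem abs_mul_deriv_log_rpow_div_rpow_mul_of_deriv_lnq_eq {β : ℝ} (hq0 : q ≠ 0)
    (hq1 : q ≠ 1) (hαβ : α.HolderConjugate β) (hc : 0 ≤ c)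
    (hg : ∀ t, 0 ≤ g t) (hm : ∀ t, 0 < m t)
    (hscore : q / m θ ^ (1 / q) * deriv (fun t => lnq (2 - q) (g t / m t ^ (1 / q))) θ
      = c * sign u * |u| ^ (α - 1)) :
    |g θ ^ (q - 1) / m θ * deriv (fun t => log (g t ^ q / m t)) θ| ^ β * g θ
      = c ^ β * (|u| ^ α * g θ) := by
  rcases (hg θ).eq_or_lt with hθ | hθ
  · rw [← hθ, mul_zero, mul_zero, mul_zero]
  · rw [rpow_sub_one_div_mul_deriv_log_rpow_div hg hm hθ,
      deriv_rpow_div_eq_mul_deriv_lnq hq0 hq1 hg hm, mul_div_cancel_right₀ _ hθ.ne', hscore,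
      mul_assoc, abs_mul, abs_of_nonneg hc, mul_rpow hc (abs_nonneg _),
      abs_sign_mul_abs_rpow_sub_one_rpow hαβ, mul_assoc]

end ScoreCondition

theorem rpow_one_div_mul_rpow_one_div_of_add_eq_one {α β c E : ℝ} (hαβ : 1 / α + 1 / β = 1)
    (hβ : β ≠ 0) (hc : 0 ≤ c) (hE : 0 ≤ E) :
    E ^ (1 / α) * (c ^ β * E) ^ (1 / β) = c * E := by
  rw [mul_rpow (rpow_nonneg hc β) hE, ← rpow_mul hc, mul_one_div_cancel hβ, rpow_one,
    mul_left_comm, ← rpow_add' hE (by rw [hαβ]; exact one_ne_zero), hαβ, rpow_one]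

theorem generalized_q_cramer_rao_equality_general
    (X : Set ℝ) (hX : MeasurableSet X)
    (f : ℝ → ℝ → ℝ) (θhat : ℝ → ℝ) (θ : ℝ) (q α β : ℝ)
    (hf_nonneg : ∀ t : ℝ, ∀ x ∈ X, 0 ≤ f t x)
    (hq : 0 < q)
    (Mq : ℝ → ℝ)
    (hMq_pos : ∀ t : ℝ, 0 < Mq t)
    (hα : 1 < α) (hαβ : 1 / α + 1 / β = 1)
    -- differentiation under the integral sign is valid:
    (B' : ℝ)
    (hB'2 : 1 + B' =
      ∫ x in X, (θhat x - θ) * deriv (fun t => f t x ^ q / Mq t) θ)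
    -- the proportionality (score) condition, with c(θ) > 0, a.e. on X:
    (c : ℝ) (hc : 0 < c)
    (heq : ∀ᵐ x ∂(volume.restrict X),
      q / Mq θ ^ (1 / q) *
          deriv (fun t => lnq (2 - q) (f t x / Mq t ^ (1 / q))) θ
        = c * Real.sign (θhat x - θ) * |θhat x - θ| ^ (α - 1)) :
    (∫ x in X, |θhat x - θ| ^ α * f θ x) ^ (1 / α) *
      (∫ x in X,
        |f θ x ^ (q - 1) / Mq θ * deriv (fun t => Real.log (f t x ^ q / Mq t)) θ| ^ β
          * f θ x) ^ (1 / β)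
      = |1 + B'| := by
  have hconj : α.HolderConjugate β :=
    holderConjugate_iff.2 ⟨hα, by simpa only [one_div] using hαβ⟩
  have hE : 0 ≤ ∫ x in X, |θhat x - θ| ^ α * f θ x :=
    setIntegral_nonneg hX fun x hx => mul_nonneg (rpow_nonneg (abs_nonneg _) _) (hf_nonneg θ x hx)
  have hf : ∀ᵐ x ∂(volume.restrict X), ∀ t, 0 ≤ f t x :=
    (ae_restrict_mem hX).mono fun x hx t => hf_nonneg t x hx
  rcases eq_or_ne q 1 with rfl | hq1
  · -- `lnq 1` is the junk constant `0`, so the score condition forces `θhat = θ` a.e.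
    have hθhat : ∀ᵐ x ∂(volume.restrict X), θhat x - θ = 0 := by
      filter_upwards [heq] with x hx
      simp only [lnq_two_sub, sub_self, div_zero, deriv_const', mul_zero, mul_assoc] at hx
      exact sign_mul_abs_rpow_eq_zero_iff.1 ((mul_eq_zero.1 hx.symm).resolve_left hc.ne')
    have hE0 : ∫ x in X, |θhat x - θ| ^ α * f θ x = 0 :=
      integral_eq_zero_of_ae (hθhat.mono fun x hx => by simp [hx, zero_rpow hconj.ne_zero])
    have hB : 1 + B' = 0 := hB'2 ▸ integral_eq_zero_of_ae (hθhat.mono fun x hx => by simp [hx])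
    rw [hE0, hB, zero_rpow (one_div_ne_zero hconj.ne_zero), zero_mul, abs_zero]
  · have hB : 1 + B' = c * ∫ x in X, |θhat x - θ| ^ α * f θ x := by
      rw [hB'2, ← integral_const_mul]
      refine integral_congr_ae ?_
      filter_upwards [heq, hf] with x hscore hx
      exact mul_deriv_rpow_div_of_deriv_lnq_eq hq.ne' hq1 hconj.ne_zero hx hMq_pos hscore
    have hI : ∫ x in X,
        |f θ x ^ (q - 1) / Mq θ * deriv (fun t => Real.log (f t x ^ q / Mq t)) θ| ^ β * f θ x
          = c ^ β * ∫ x in X, |θhat x - θ| ^ α * f θ x := by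
      rw [← integral_const_mul]
      refine integral_congr_ae ?_
      filter_upwards [heq, hf] with x hscore hx
      exact abs_mul_deriv_log_rpow_div_rpow_mul_of_deriv_lnq_eq hq.ne' hq1 hconj hc.le hx
        hMq_pos hscore
    rw [hI, hB, abs_of_nonneg (mul_nonneg hc.le hE)]
    exact rpow_one_div_mul_rpow_one_div_of_add_eq_one hαβ hconj.symm.ne_zero hc.le hE

/-- **Equality case of the generalized q-Cramér–Rao inequality.**
If the score condition
`(q / M_q^{1/q}) ∂_θ ln_{q*}(f / M_q^{1/q}) = c(θ) sign(θhat - θ) |θhat - θ|^{α-1}`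
holds almost everywhere on `X` (with `q* = 2 - q` and `c(θ) > 0`), then the generalized
`q`-Cramér–Rao inequality is saturated. -/
theorem generalized_q_cramer_rao_equality
    (X : Set ℝ) (hX : MeasurableSet X)
    (f : ℝ → ℝ → ℝ) (θhat : ℝ → ℝ) (θ : ℝ) (q α β : ℝ)
    (hf_meas : Measurable (Function.uncurry f))
    (hf_nonneg : ∀ t : ℝ, ∀ x ∈ X, 0 ≤ f t x)
    (hf_int : ∀ t : ℝ, IntegrableOn (f t) X)
    (hf_prob : ∀ t : ℝ, ∫ x in X, f t x = 1)
    (hq : 0 < q)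
    (Mq : ℝ → ℝ) (hMq : ∀ t : ℝ, Mq t = ∫ x in X, f t x ^ q)
    (hMq_int : ∀ t : ℝ, IntegrableOn (fun x => f t x ^ q) X)
    (hMq_pos : ∀ t : ℝ, 0 < Mq t)
    (hα : 1 < α) (hαβ : 1 / α + 1 / β = 1)
    -- the q-bias
    (Bq : ℝ → ℝ)
    (hBq : ∀ t : ℝ, Bq t = ∫ x in X, (θhat x - t) * (f t x ^ q / Mq t))
    -- differentiation under the integral sign is valid:
    (B' : ℝ) (hB'1 : HasDerivAt Bq B' θ)
    (hB'2 : 1 + B' =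
      ∫ x in X, (θhat x - θ) * deriv (fun t => f t x ^ q / Mq t) θ)
    -- the proportionality (score) condition, with c(θ) > 0, a.e. on X:
    (c : ℝ) (hc : 0 < c)
    (heq : ∀ᵐ x ∂(volume.restrict X),
      q / Mq θ ^ (1 / q) *
          deriv (fun t => lnq (2 - q) (f t x / Mq t ^ (1 / q))) θ
        = c * Real.sign (θhat x - θ) * |θhat x - θ| ^ (α - 1)) :
    (∫ x in X, |θhat x - θ| ^ α * f θ x) ^ (1 / α) *
      (∫ x in X,
        |f θ x ^ (q - 1) / Mq θ * deriv (fun t => Real.log (f t x ^ q / Mq t)) θ| ^ β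
          * f θ x) ^ (1 / β)
      = |1 + B'| :=
  generalized_q_cramer_rao_equality_general X hX f θhat θ q α β hf_nonneg hq Mq hMq_pos hα hαβ B'
    hB'2 c hc heq
end

section
/- (Saturation of the generalized q-Cramér–Rao inequality by generalized q-Gaussians.) Let α > 1, β its Hölder conjugate (1/α + 1/β = 1), q > 1 − α, q ≠ 1, γ > 0, and let G(x) = Z^{-1} (1 − (q−1) γ |x|^α)_+^{1/(q−1)} be the generalized q-Gaussian density on ℝ, where Z = ∫_ℝ (1 − (q−1) γ |x|^α)_+^{1/(q−1)} dx. Assume ∫_ℝ |x|^α G(x) dx and M_q[G] = ∫_ℝ G(x)^q dx are finite. Then equality holds in the generalized Cramér–Rao inequality: (∫_ℝ |x|^α G(x) dx)^{1/α} · I_{β,q}[G]^{1/β} = 1, where I_{β,q}[G] = (q/M_q[G])^β · ∫_ℝ |G(x)^{q−1} · G'(x)/G(x)|^β G(x) dx (the derivative taken in the interior of the support of G). -/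
/-!
Write `u = 1 - c|x|^α` with `c = (q-1)γ` and `p = 1/(q-1)`, so that `G = Z⁻¹ u₊^p`. On the support
`G^(q-1) (ln G)' = -γα |x|^(α-2) x / Z^(q-1)`, hence the information integrand is
`(γα / Z^(q-1))^β |x|^α G`. Integrating `d/dx (x u₊^(p+1)) = u₊^(p+1) - (p+1)cα |x|^α u₊^p` over the
line gives `M_q Z^(q-1) = qγα E|x|^α`, and since `1/α + 1/β = 1` the product
`E[|x|^α]^(1/α) I^(1/β)` collapses to `1`. No boundary terms appear: `x u₊^(p+1)` has limits at `±∞`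
because its derivative is integrable, and they vanish because `u₊^(p+1) = Z^q G^q` is integrable.
-/

open MeasureTheory Real Filter Set Asymptotics Topology

theorem hasDerivAt_max_zero_rpow {s : ℝ} (hs : 1 < s) (y : ℝ) :
    HasDerivAt (fun y => max y 0 ^ s) (s * max y 0 ^ (s - 1)) y := by
  rcases lt_trichotomy y 0 with hy | rfl | hy
  · rw [max_eq_right hy.le, zero_rpow (by linarith), mul_zero]
    refine (hasDerivAt_const y (0 : ℝ)).congr_of_eventuallyEq ?_
    filter_upwards [Iio_mem_nhds hy] with z hz
    rw [max_eq_right (le_of_lt hz), zero_rpow (by linarith)]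
  · -- `max h 0 ^ s ≤ |h| ^ s`, and the latter is `o(h)`
    have habs := hasDerivAt_abs_rpow 0 hs
    rw [hasDerivAt_iff_isLittleO_nhds_zero] at habs ⊢
    simp only [zero_add, abs_zero, zero_rpow (by linarith : s ≠ 0),
      zero_rpow (by linarith : s - 1 ≠ 0), sub_zero, mul_zero, smul_zero, max_self] at habs ⊢
    refine IsBigO.trans_isLittleO (IsBigO.of_bound 1 (Eventually.of_forall fun h => ?_)) habs
    rw [one_mul, norm_of_nonneg (rpow_nonneg (le_max_right _ _) _),
      norm_of_nonneg (rpow_nonneg (abs_nonneg _) _)]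
    exact rpow_le_rpow (le_max_right _ _) (max_le (le_abs_self h) (abs_nonneg h)) (by linarith)
  · rw [max_eq_left hy.le]
    refine (hasDerivAt_rpow_const (Or.inl hy.ne')).congr_of_eventuallyEq ?_
    filter_upwards [Ioi_mem_nhds hy] with z hz
    rw [max_eq_left (le_of_lt hz)]

theorem HasDerivAt.max_zero_rpow {f : ℝ → ℝ} {f' x s : ℝ} (hf : HasDerivAt f f' x)
    (h : 1 < s ∨ 0 < f x) :
    HasDerivAt (fun y => max (f y) 0 ^ s) (s * max (f x) 0 ^ (s - 1) * f') x := by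
  rcases h with hs | hfx
  · exact (hasDerivAt_max_zero_rpow hs (f x)).comp x hf
  · rw [max_eq_left hfx.le]
    refine ((hf.rpow_const (p := s) (Or.inl hfx.ne')).congr_deriv (by ring)).congr_of_eventuallyEq
      ?_
    filter_upwards [hf.continuousAt.eventually (Ioi_mem_nhds hfx)] with z hz
    rw [max_eq_left (le_of_lt hz)]

theorem eq_zero_of_tendsto_mul_of_integrableOn_Ioi {g : ℝ → ℝ} {a L : ℝ}
    (hlim : Tendsto (fun x => x * g x) atTop (𝓝 L)) (hg : IntegrableOn g (Ioi a)) : L = 0 := by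
  -- otherwise `|L| / 2 ≤ x |g x|` for large `x`, against the non-integrability of `x⁻¹`
  by_contra hL
  have hL' : 0 < |L| := abs_pos.2 hL
  obtain ⟨R, hR⟩ := eventually_atTop.1 <|
    (hlim.abs.eventually (lt_mem_nhds (half_lt_self hL'))).and (eventually_gt_atTop (max a 0))
  refine not_integrableOn_Ioi_inv (a := R) ?_
  refine Integrable.mono' ((hg.mono_set (Ioi_subset_Ioi ?_)).norm.const_mul (2 / |L|))
    (by fun_prop) ?_
  · exact (le_max_left a 0).trans (hR R le_rfl).2.le
  filter_upwards [ae_restrict_mem measurableSet_Ioi] with x hx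
  obtain ⟨hxL, hx0⟩ := hR x (le_of_lt hx)
  have hx0 : 0 < x := (le_max_right a 0).trans_lt hx0
  rw [abs_mul, abs_of_pos hx0] at hxL
  rw [norm_inv, norm_of_nonneg hx0.le, Real.norm_eq_abs, inv_le_iff_one_le_mul₀ hx0]
  calc (1 : ℝ) = 2 / |L| * (|L| / 2) := by field_simp
    _ ≤ 2 / |L| * (x * |g x|) := by gcongr
    _ = 2 / |L| * |g x| * x := by ring

theorem integral_eq_zero_of_hasDerivAt_of_eq_mul {f f' g : ℝ → ℝ}
    (hderiv : ∀ x, HasDerivAt f (f' x) x) (hf' : Integrable f') (hg : Integrable g)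
    (hfg : ∀ x, f x = x * g x) : ∫ x, f' x = 0 := by
  have htop := tendsto_limUnder_of_hasDerivAt_of_integrableOn_Ioi (a := 0)
    (fun x _ => hderiv x) hf'.integrableOn
  have hbot := tendsto_limUnder_of_hasDerivAt_of_integrableOn_Iic (a := 0)
    (fun x _ => hderiv x) hf'.integrableOn
  have htop0 : limUnder atTop f = 0 := by
    refine eq_zero_of_tendsto_mul_of_integrableOn_Ioi (a := 0) ?_ hg.integrableOn
    simpa only [← hfg] using htop
  have hbot0 : limUnder atBot f = 0 := by
    refine eq_zero_of_tendsto_mul_of_integrableOn_Ioi (g := fun x => -g (-x)) (a := 0) ?_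
      hg.comp_neg.neg.integrableOn
    have := hbot.comp tendsto_neg_atTop_atBot
    simpa only [Function.comp_def, hfg, neg_mul, mul_neg] using this
  simpa [htop0, hbot0] using integral_of_hasDerivAt_of_tendsto hderiv hf' hbot htop

theorem one_add_rpow_le_two_rpow_mul {t α : ℝ} (ht : 0 ≤ t) (hα : 0 ≤ α) :
    (1 + t) ^ α ≤ 2 ^ α * (1 + t ^ α) := by
  calc (1 + t) ^ α ≤ (2 * max 1 t) ^ α := by
        gcongr; linarith [le_max_left 1 t, le_max_right 1 t]
    _ = 2 ^ α * max 1 t ^ α := mul_rpow zero_le_two (le_max_of_le_left zero_le_one)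
    _ ≤ 2 ^ α * (1 + t ^ α) := by
        gcongr
        rcases le_total 1 t with h | h
        · rw [max_eq_right h]; linarith [rpow_nonneg ht α]
        · rw [max_eq_left h, one_rpow]; linarith [rpow_nonneg ht α]

/-- The `q`-Gaussian of the statement is `qGaussianKernel ((q - 1) * γ) α (1 / (q - 1)) / Z`. -/
noncomputable def qGaussianKernel (c α p x : ℝ) : ℝ := max (1 - c * |x| ^ α) 0 ^ p

section qGaussianKernel

variable {c α p : ℝ}

theorem qGaussianKernel_nonneg (x : ℝ) : 0 ≤ qGaussianKernel c α p x :=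
  rpow_nonneg (le_max_right _ _) p

theorem qGaussianKernel_rpow (x r : ℝ) :
    qGaussianKernel c α p x ^ r = qGaussianKernel c α (p * r) x :=
  (rpow_mul (le_max_right _ _) p r).symm

theorem qGaussianKernel_of_pos {x : ℝ} (hx : 0 < 1 - c * |x| ^ α) :
    qGaussianKernel c α p x = (1 - c * |x| ^ α) ^ p := by
  rw [qGaussianKernel, max_eq_left hx.le]

theorem qGaussianKernel_of_nonpos {x : ℝ} (hp : p ≠ 0) (hx : 1 - c * |x| ^ α ≤ 0) :
    qGaussianKernel c α p x = 0 := by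
  rw [qGaussianKernel, max_eq_right hx, zero_rpow hp]

theorem continuous_one_sub_mul_abs_rpow (hα : 0 ≤ α) : Continuous fun x : ℝ => 1 - c * |x| ^ α :=
  continuous_const.sub (continuous_const.mul (continuous_abs.rpow_const fun _ => Or.inr hα))

theorem measurable_qGaussianKernel : Measurable (qGaussianKernel c α p) := by
  unfold qGaussianKernel; fun_prop

theorem hasDerivAt_qGaussianKernel (hα : 1 < α) {x : ℝ} (h : 1 < p ∨ 0 < 1 - c * |x| ^ α) :
    HasDerivAt (qGaussianKernel c α p)
      (p * qGaussianKernel c α (p - 1) x * (-c * (α * |x| ^ (α - 2) * x))) x := by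
  have hu := ((hasDerivAt_abs_rpow x hα).const_mul c).const_sub 1
  exact (hu.max_zero_rpow h).congr_deriv (by rw [qGaussianKernel]; ring)

theorem integrable_qGaussianKernel_of_pos (hα : 0 < α) (hc : 0 < c) (hp : 0 < p) :
    Integrable (qGaussianKernel c α p) := by
  refine Continuous.integrable_of_hasCompactSupport
    (((continuous_one_sub_mul_abs_rpow hα.le).max continuous_const).rpow_const
      fun _ => Or.inr hp.le) ?_
  refine HasCompactSupport.intro (isCompact_Icc (a := -c⁻¹ ^ α⁻¹) (b := c⁻¹ ^ α⁻¹))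
    fun x hx => ?_
  have hx : c⁻¹ ^ α⁻¹ < |x| := by rw [mem_Icc, ← abs_le, not_le] at hx; exact hx
  have hxα : c⁻¹ < |x| ^ α := by
    simpa only [rpow_inv_rpow (inv_nonneg.2 hc.le) hα.ne'] using
      rpow_lt_rpow (by positivity) hx hα
  refine qGaussianKernel_of_nonpos hp.ne' ?_
  nlinarith [mul_inv_cancel₀ hc.ne']

theorem integrable_qGaussianKernel_of_neg (hα : 0 < α) (hc : c < 0) (hαp : α * p < -1) :
    Integrable (qGaussianKernel c α p) := by
  have hp : p ≤ 0 := by nlinarith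
  set m := min 1 (-c) / 2 ^ α with hm_def
  have hm : 0 < m := div_pos (lt_min one_pos (neg_pos.2 hc)) (by positivity)
  have hbound : ∀ x : ℝ, qGaussianKernel c α p x ≤ m ^ p * (1 + ‖x‖) ^ (α * p) := by
    intro x
    have hlower : m * (1 + |x|) ^ α ≤ 1 - c * |x| ^ α :=
      calc m * (1 + |x|) ^ α ≤ m * (2 ^ α * (1 + |x| ^ α)) := by
            gcongr; exact one_add_rpow_le_two_rpow_mul (abs_nonneg x) hα.le
        _ = min 1 (-c) * (1 + |x| ^ α) := by rw [hm_def]; field_simp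
        _ ≤ 1 - c * |x| ^ α := by
            nlinarith [min_le_left 1 (-c), min_le_right 1 (-c), rpow_nonneg (abs_nonneg x) α]
    have hpos : 0 < m * (1 + |x|) ^ α := by positivity
    rw [qGaussianKernel_of_pos (hpos.trans_le hlower), Real.norm_eq_abs]
    calc (1 - c * |x| ^ α) ^ p ≤ (m * (1 + |x|) ^ α) ^ p := rpow_le_rpow_of_nonpos hpos hlower hp
      _ = m ^ p * (1 + |x|) ^ (α * p) := by
          rw [mul_rpow hm.le (by positivity), ← rpow_mul (by positivity)]
  refine ((integrable_one_add_norm (E := ℝ) (μ := volume) (r := -(α * p)) ?_).const_mul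
    (m ^ p)).mono' measurable_qGaussianKernel.aestronglyMeasurable
    (Eventually.of_forall fun x => ?_)
  · rw [Module.finrank_self, Nat.cast_one]; linarith
  · rw [norm_of_nonneg (qGaussianKernel_nonneg x), neg_neg]; exact hbound x

theorem integrable_qGaussianKernel {q γ : ℝ} (hα : 0 < α) (hq : 1 - α < q) (hq1 : q ≠ 1)
    (hγ : 0 < γ) : Integrable (qGaussianKernel ((q - 1) * γ) α (1 / (q - 1))) := by
  rcases lt_or_gt_of_ne hq1 with h | h
  · refine integrable_qGaussianKernel_of_neg hα (mul_neg_of_neg_of_pos (by linarith) hγ) ?_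
    rw [mul_one_div, div_lt_iff_of_neg (by linarith)]
    linarith
  · exact integrable_qGaussianKernel_of_pos hα (mul_pos (by linarith) hγ)
      (one_div_pos.2 (by linarith))

theorem integral_qGaussianKernel_pos (hα : 0 < α) (h : Integrable (qGaussianKernel c α p)) :
    0 < ∫ x, qGaussianKernel c α p x := by
  rw [integral_pos_iff_support_of_nonneg qGaussianKernel_nonneg h]
  have hopen : IsOpen {x : ℝ | 0 < 1 - c * |x| ^ α} :=
    isOpen_lt continuous_const (continuous_one_sub_mul_abs_rpow hα.le)
  have hzero : (0 : ℝ) ∈ {x : ℝ | 0 < 1 - c * |x| ^ α} := by simp [zero_rpow hα.ne']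
  calc 0 < volume {x : ℝ | 0 < 1 - c * |x| ^ α} := hopen.measure_pos volume ⟨0, hzero⟩
    _ ≤ volume (Function.support (qGaussianKernel c α p)) := measure_mono fun x hx => by
        rw [Function.mem_support, qGaussianKernel_of_pos hx]; exact (rpow_pos_of_pos hx p).ne'

theorem integral_qGaussianKernel_add_one (hα : 1 < α) (hpc : 0 < p ∨ c ≤ 0)
    (h2 : Integrable (qGaussianKernel c α (p + 1)))
    (h1 : Integrable fun x => |x| ^ α * qGaussianKernel c α p x) :
    ∫ x, qGaussianKernel c α (p + 1) x
      = (p + 1) * c * α * ∫ x, |x| ^ α * qGaussianKernel c α p x := by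
  have hderiv : ∀ x, HasDerivAt (fun x => x * qGaussianKernel c α (p + 1) x)
      (qGaussianKernel c α (p + 1) x - (p + 1) * c * α * (|x| ^ α * qGaussianKernel c α p x))
      x := by
    intro x
    have hK := hasDerivAt_qGaussianKernel hα (p := p + 1) (x := x) <| by
      rcases hpc with hp | hc
      · exact Or.inl (by linarith)
      · exact Or.inr <| by
          linarith [mul_nonpos_of_nonpos_of_nonneg hc (rpow_nonneg (abs_nonneg x) α)]
    have hsq : x * (|x| ^ (α - 2) * x) = |x| ^ α := by
      calc x * (|x| ^ (α - 2) * x) = |x| ^ (α - 2) * |x| * |x| := by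
            rw [mul_assoc, abs_mul_abs_self]; ring
        _ = |x| ^ α := by
            rw [← rpow_add_one' (abs_nonneg x) (by linarith),
              ← rpow_add_one' (abs_nonneg x) (by linarith)]
            ring_nf
    refine ((hasDerivAt_id x).mul hK).congr_deriv ?_
    rw [add_sub_cancel_right, id, ← hsq]
    ring
  have h := integral_eq_zero_of_hasDerivAt_of_eq_mul hderiv (h2.sub (h1.const_mul _)) h2
    fun _ => rfl
  rwa [integral_sub h2 (h1.const_mul _), integral_const_mul, sub_eq_zero] at h

end qGaussianKernel

section qGaussian

variable {c α p q Z : ℝ} {G : ℝ → ℝ}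

theorem qGaussian_score (hα : 1 < α) (hZ : 0 < Z) (hpq : p * (q - 1) = 1)
    (hG : ∀ x, G x = qGaussianKernel c α p x / Z) {x : ℝ} (hx : 0 < 1 - c * |x| ^ α) :
    G x ^ (q - 1) * deriv G x / G x = p * (-c * (α * |x| ^ (α - 2) * x)) / Z ^ (q - 1) := by
  have hderiv : deriv G x
      = p * qGaussianKernel c α (p - 1) x * (-c * (α * |x| ^ (α - 2) * x)) / Z := by
    rw [funext hG]
    exact ((hasDerivAt_qGaussianKernel hα (Or.inr hx)).div_const Z).deriv
  have hGq : G x ^ (q - 1) = (1 - c * |x| ^ α) / Z ^ (q - 1) := by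
    rw [hG, div_rpow (qGaussianKernel_nonneg x) hZ.le, qGaussianKernel_rpow, hpq,
      qGaussianKernel_of_pos hx, rpow_one]
  have hup : 0 < (1 - c * |x| ^ α) ^ p := rpow_pos_of_pos hx p
  rw [hGq, hderiv, hG, qGaussianKernel_of_pos hx, qGaussianKernel_of_pos hx,
    rpow_sub_one hx.ne']
  field_simp

theorem qGaussian_information_integrand (hα : 1 < α) (hZ : 0 < Z) (hpq : p * (q - 1) = 1)
    (hG : ∀ x, G x = qGaussianKernel c α p x / Z) {β : ℝ} (hαβ : (α - 1) * β = α) (x : ℝ) :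
    |G x ^ (q - 1) * deriv G x / G x| ^ β * G x
      = (|p * c| * α / Z ^ (q - 1)) ^ β * (|x| ^ α * G x) := by
  rcases le_or_gt (1 - c * |x| ^ α) 0 with hx | hx
  · -- off the support both sides vanish, whatever the value of `deriv G x`
    have hGx : G x = 0 := by
      rw [hG, qGaussianKernel_of_nonpos (left_ne_zero_of_mul_eq_one hpq) hx, zero_div]
    simp [hGx]
  have hZq : 0 < Z ^ (q - 1) := rpow_pos_of_pos hZ _
  have habs : |p * (-c * (α * |x| ^ (α - 2) * x)) / Z ^ (q - 1)|
      = |p * c| * α / Z ^ (q - 1) * |x| ^ (α - 1) := by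
    rw [abs_div, abs_of_pos hZq, abs_mul, abs_mul, abs_mul, abs_mul, abs_mul, abs_neg,
      abs_of_pos (by linarith : 0 < α), abs_of_nonneg (rpow_nonneg (abs_nonneg x) _),
      show α - 1 = α - 2 + 1 by ring, rpow_add_one' (abs_nonneg x) (by linarith)]
    ring
  rw [qGaussian_score hα hZ hpq hG hx, habs,
    mul_rpow (by positivity) (rpow_nonneg (abs_nonneg x) _), ← rpow_mul (abs_nonneg x), hαβ]
  ring

theorem qGaussian_rpow (hZ : 0 < Z) (hpq : p * (q - 1) = 1)
    (hG : ∀ x, G x = qGaussianKernel c α p x / Z) (x : ℝ) :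
    G x ^ q = qGaussianKernel c α (p + 1) x / Z ^ q := by
  rw [hG, div_rpow (qGaussianKernel_nonneg x) hZ.le, qGaussianKernel_rpow,
    show p * q = p + 1 by linear_combination hpq]

theorem integrable_qGaussianKernel_add_one_of_integrable_rpow (hZ : 0 < Z)
    (hpq : p * (q - 1) = 1) (hG : ∀ x, G x = qGaussianKernel c α p x / Z)
    (hint : Integrable fun x => G x ^ q) : Integrable (qGaussianKernel c α (p + 1)) :=
  (hint.mul_const (Z ^ q)).congr (Eventually.of_forall fun x => by
    simp only [qGaussian_rpow hZ hpq hG x]; field_simp)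

theorem integral_qGaussian_rpow_pos (hα : 0 < α) (hZ : 0 < Z) (hpq : p * (q - 1) = 1)
    (hG : ∀ x, G x = qGaussianKernel c α p x / Z) (hint : Integrable fun x => G x ^ q) :
    0 < ∫ x, G x ^ q := by
  simp only [qGaussian_rpow hZ hpq hG]
  rw [integral_div]
  exact div_pos (integral_qGaussianKernel_pos hα
    (integrable_qGaussianKernel_add_one_of_integrable_rpow hZ hpq hG hint)) (rpow_pos_of_pos hZ q)

theorem integral_qGaussian_rpow_mul_rpow_sub_one (hα : 1 < α) (hZ : 0 < Z)
    (hpq : p * (q - 1) = 1) (hG : ∀ x, G x = qGaussianKernel c α p x / Z)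
    (hpc : 0 < p ∨ c ≤ 0) (hmom : Integrable fun x => |x| ^ α * G x)
    (hint : Integrable fun x => G x ^ q) :
    (∫ x, G x ^ q) * Z ^ (q - 1) = (p + 1) * c * α * ∫ x, |x| ^ α * G x := by
  have hmom' : Integrable fun x => |x| ^ α * qGaussianKernel c α p x :=
    (hmom.mul_const Z).congr (Eventually.of_forall fun x => by simp only [hG x]; field_simp)
  have hZq : Z ^ q ≠ 0 := (rpow_pos_of_pos hZ q).ne'
  simp only [qGaussian_rpow hZ hpq hG]
  simp only [hG, ← mul_div_assoc]
  rw [integral_div, integral_div, integral_qGaussianKernel_add_one hα hpc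
    (integrable_qGaussianKernel_add_one_of_integrable_rpow hZ hpq hG hint) hmom',
    rpow_sub_one hZ.ne']
  field_simp

end qGaussian

theorem rpow_one_div_mul_rpow_one_div_eq_one {α β b s E : ℝ} (hαβ : α.HolderConjugate β)
    (hs : 0 ≤ s) (hE : 0 ≤ E) (h : b * s * E = 1) :
    E ^ (1 / α) * (b ^ β * (s ^ β * E)) ^ (1 / β) = 1 := by
  have hαβ' : 1 / α + 1 / β = 1 := by simpa only [one_div] using hαβ.inv_add_inv_eq_one
  have hb : 0 ≤ b := by
    by_contra! hb
    nlinarith [mul_nonneg hs hE]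
  calc E ^ (1 / α) * (b ^ β * (s ^ β * E)) ^ (1 / β)
      = E ^ (1 / α) * ((b * s) ^ β * E) ^ (1 / β) := by rw [mul_rpow hb hs, mul_assoc]
    _ = b * s * E ^ (1 / α + 1 / β) := by
        rw [mul_rpow (rpow_nonneg (mul_nonneg hb hs) _) hE, ← rpow_mul (mul_nonneg hb hs),
          mul_one_div_cancel hαβ.symm.ne_zero, rpow_one,
          rpow_add' hE (by rw [hαβ']; exact one_ne_zero)]
        ring
    _ = 1 := by rw [hαβ', rpow_one, h]

/-- **Saturation of the generalized q-Cramér–Rao inequality by generalized q-Gaussians.**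
For Hölder conjugates `α > 1, β`, `q > 1 − α`, `q ≠ 1`, `γ > 0`, the generalized
`q`-Gaussian `G(x) = Z⁻¹ (1 − (q−1)γ|x|^α)₊^{1/(q−1)}` saturates the translation
`q`-Cramér–Rao inequality: `E[|x|^α]^(1/α) · I_{β,q}[G]^(1/β) = 1`. -/
theorem q_gaussian_saturates_q_cramer_rao
    (α β q γ : ℝ)
    (hα : 1 < α) (hαβ : 1 / α + 1 / β = 1)
    (hq : 1 - α < q) (hq1 : q ≠ 1) (hγ : 0 < γ)
    (Z : ℝ)
    (hZ : Z = ∫ x : ℝ, max (1 - (q - 1) * γ * |x| ^ α) 0 ^ (1 / (q - 1)))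
    (G : ℝ → ℝ)
    (hG : ∀ x : ℝ, G x = max (1 - (q - 1) * γ * |x| ^ α) 0 ^ (1 / (q - 1)) / Z)
    -- finiteness of the α-moment and of the information generating function
    (hmom : Integrable (fun x : ℝ => |x| ^ α * G x))
    (hMq_int : Integrable (fun x : ℝ => G x ^ q))
    (Mq : ℝ) (hMq : Mq = ∫ x : ℝ, G x ^ q) :
    (∫ x : ℝ, |x| ^ α * G x) ^ (1 / α) *
      ((q / Mq) ^ β *
        ∫ x : ℝ, |G x ^ (q - 1) * deriv G x / G x| ^ β * G x) ^ (1 / β)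
      = 1 := by
  set c := (q - 1) * γ with hc
  set p := 1 / (q - 1)
  have hpq : p * (q - 1) = 1 := one_div_mul_cancel (sub_ne_zero.2 hq1)
  have hpc : p * c = γ := by rw [hc, ← mul_assoc, hpq, one_mul]
  have hconj : α.HolderConjugate β :=
    Real.holderConjugate_iff.2 ⟨hα, by simpa only [one_div] using hαβ⟩
  have hG' : ∀ x, G x = qGaussianKernel c α p x / Z := hG
  have hZ0 : 0 < Z := hZ ▸ integral_qGaussianKernel_pos hconj.pos
    (integrable_qGaussianKernel hconj.pos hq hq1 hγ)
  have hMq0 : Mq ≠ 0 := hMq ▸ (integral_qGaussian_rpow_pos hconj.pos hZ0 hpq hG' hMq_int).ne'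
  have hescort := integral_qGaussian_rpow_mul_rpow_sub_one hα hZ0 hpq hG'
    ((le_or_gt c 0).elim Or.inr fun hc0 => Or.inl (pos_of_mul_pos_left (hpc ▸ hγ) hc0.le))
    hmom hMq_int
  rw [← hMq, show (p + 1) * c = q * γ by rw [add_mul, hpc, hc]; ring] at hescort
  have hinfo : ∫ x, |G x ^ (q - 1) * deriv G x / G x| ^ β * G x
      = (γ * α / Z ^ (q - 1)) ^ β * ∫ x, |x| ^ α * G x := by
    simp only [qGaussian_information_integrand hα hZ0 hpq hG' hconj.sub_one_mul_conj, hpc,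
      abs_of_pos hγ]
    exact integral_const_mul _ _
  have hmoment_nonneg : 0 ≤ ∫ x, |x| ^ α * G x := integral_nonneg fun x =>
    mul_nonneg (by positivity) (hG' x ▸ div_nonneg (qGaussianKernel_nonneg x) hZ0.le)
  rw [hinfo]
  refine rpow_one_div_mul_rpow_one_div_eq_one hconj (by positivity) hmoment_nonneg ?_
  have hZq : Z ^ (q - 1) ≠ 0 := (rpow_pos_of_pos hZ0 _).ne'
  field_simp
  linear_combination -hescort
end
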